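/- arXiv:1302.1452 — 2 statements merged into one kernel-verified Lean document; each statement's English description precedes it below -/
import Mathlib

section
/- Perron's discontinuous integral: for c > 0 and y > 0, the contour integral (1/(2πi)) ∫_{c-i∞}^{c+i∞} y^s ds/s equals 0 if 0 < y < 1, equals 1/2 if y = 1, and equals 1 if y > 1. -/
/-!
Write `y ^ s / s = e^{a s} / s` with `a = log y`. For `a < 0`, Cauchy's theorem moves the line
`Re s = c` to `Re s = R` with `R → ∞`; the horizontal sides are `O(1/T)` uniformly in `R`, so the
integral tends to `0`. For every `a`, the substitution `s ↦ -s` turns the integral of `e^{-a s}/s`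
over `Re s = c` into minus that of `e^{a s}/s` over `Re s = -c`. On the rectangle between these
lines `e^{a s}/s` is the entire function `(e^{a s} - 1)/s` plus `1/s`, and the two sides contribute
`4 i arctan (T / c) → 2πi` through `1/s`. So the integrals for `a` and `-a` add up to `2πi` in the
limit, which gives `πi` for `a = 0` and `2πi` for `a > 0`.
-/

open Complex Filter Set MeasureTheory intervalIntegral Topology

noncomputable section

namespace Perron

/-- The contour integral of `f` over `[σ - T i, σ + T i]` is `I * verticalIntegral f σ T`. -/
def verticalIntegral (f : ℂ → ℂ) (σ T : ℝ) : ℂ := ∫ t in (-T)..T, f (σ + t * I)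

def horizontalIntegral (f : ℂ → ℂ) (σ₁ σ₂ τ : ℝ) : ℂ := ∫ x in σ₁..σ₂, f (x + τ * I)

theorem I_mul_verticalIntegral_sub {f : ℂ → ℂ} {σ₁ σ₂ T : ℝ}
    (hf : DifferentiableOn ℂ f (uIcc σ₁ σ₂ ×ℂ uIcc (-T) T)) :
    I * verticalIntegral f σ₂ T - I * verticalIntegral f σ₁ T =
      horizontalIntegral f σ₁ σ₂ T - horizontalIntegral f σ₁ σ₂ (-T) := by
  have h := integral_boundary_rect_eq_zero_of_differentiableOn f ⟨σ₁, -T⟩ ⟨σ₂, T⟩ hf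
  simp only [smul_eq_mul] at h
  rw [verticalIntegral, verticalIntegral, horizontalIntegral, horizontalIntegral]
  linear_combination h

theorem norm_horizontalIntegral_le {f : ℂ → ℂ} {σ₁ σ₂ τ M : ℝ} (h : σ₁ ≤ σ₂)
    (hf : ∀ x ∈ Icc σ₁ σ₂, ‖f (x + τ * I)‖ ≤ M) :
    ‖horizontalIntegral f σ₁ σ₂ τ‖ ≤ M * (σ₂ - σ₁) := by
  have := norm_integral_le_of_norm_le_const (f := fun x : ℝ => f (x + τ * I))
    fun x hx => hf x (Ioc_subset_Icc_self (by rwa [uIoc_of_le h] at hx))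
  rwa [abs_of_nonneg (sub_nonneg.2 h)] at this

theorem tendsto_horizontalIntegral_cocompact {f : ℂ → ℂ} {σ₁ σ₂ M : ℝ} (h : σ₁ ≤ σ₂)
    (hf : ∀ s : ℂ, s.re ∈ Icc σ₁ σ₂ → s.im ≠ 0 → ‖f s‖ ≤ M / |s.im|) :
    Tendsto (horizontalIntegral f σ₁ σ₂) (cocompact ℝ) (𝓝 0) := by
  have hlim : Tendsto (fun τ : ℝ => M * (σ₂ - σ₁) * |τ|⁻¹) (cocompact ℝ) (𝓝 0) := by
    simpa using (tendsto_inv_atTop_zero.comp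
      (tendsto_norm_cocompact_atTop (E := ℝ))).const_mul (M * (σ₂ - σ₁))
  refine squeeze_zero_norm' ?_ hlim
  filter_upwards [(tendsto_norm_cocompact_atTop (E := ℝ)).eventually_gt_atTop 0] with τ hτ
  calc ‖horizontalIntegral f σ₁ σ₂ τ‖ ≤ M / |τ| * (σ₂ - σ₁) :=
        norm_horizontalIntegral_le h fun x hx => by
          simpa using hf (x + τ * I) (by simpa using hx) (by simpa using abs_pos.1 hτ)
    _ = M * (σ₂ - σ₁) * |τ|⁻¹ := by ring

def kernel (a : ℝ) (s : ℂ) : ℂ := cexp (a * s) / s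

theorem norm_kernel (a : ℝ) (s : ℂ) : ‖kernel a s‖ = Real.exp (a * s.re) / ‖s‖ := by
  rw [kernel, norm_div, norm_exp, re_ofReal_mul]

theorem differentiableOn_kernel (a : ℝ) : DifferentiableOn ℂ (kernel a) {0}ᶜ :=
  fun _ hs => ((differentiable_exp.comp (differentiable_id.const_mul _)).differentiableAt.div
    differentiableAt_id (mem_compl_singleton_iff.1 hs)).differentiableWithinAt

theorem uIcc_reProdIm_subset_compl_zero {σ₁ σ₂ : ℝ} (h₁ : 0 < σ₁) (h₂ : 0 < σ₂) (t : Set ℝ) :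
    uIcc σ₁ σ₂ ×ℂ t ⊆ {0}ᶜ := by
  rintro s ⟨hs, -⟩ rfl
  have : min σ₁ σ₂ ≤ 0 := (mem_preimage.1 hs).1
  exact this.not_gt (lt_min h₁ h₂)

theorem integral_exp_mul_le {a : ℝ} (ha : a < 0) (c R : ℝ) :
    ∫ x in c..R, Real.exp (a * x) ≤ Real.exp (a * c) / (-a) := by
  rw [integral_comp_mul_left Real.exp ha.ne, integral_exp, smul_eq_mul, inv_mul_eq_div,
    ← neg_div_neg_eq, neg_sub]
  gcongr
  · linarith
  · linarith [Real.exp_pos (a * R)]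

theorem norm_horizontalIntegral_kernel_le {a c R τ : ℝ} (ha : a < 0) (hcR : c ≤ R)
    (hτ : τ ≠ 0) :
    ‖horizontalIntegral (kernel a) c R τ‖ ≤ Real.exp (a * c) / (-a) / |τ| := by
  have hτ' : 0 < |τ| := abs_pos.2 hτ
  calc ‖horizontalIntegral (kernel a) c R τ‖ ≤ ∫ x in c..R, Real.exp (a * x) / |τ| := by
        refine norm_integral_le_of_norm_le hcR (Eventually.of_forall fun x _ => ?_)
          ((Real.continuous_exp.comp (continuous_const.mul continuous_id)).div_const _
            |>.intervalIntegrable _ _)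
        rw [norm_kernel, show ((x : ℂ) + τ * I).re = x by simp]
        exact div_le_div_of_nonneg_left (by positivity) hτ'
          (by simpa using abs_im_le_norm (x + τ * I))
    _ ≤ Real.exp (a * c) / (-a) / |τ| := by
        rw [intervalIntegral.integral_div]
        gcongr
        exact integral_exp_mul_le ha c R

theorem norm_verticalIntegral_kernel_le (a : ℝ) {R T : ℝ} (hR : 0 < R) (hT : 0 ≤ T) :
    ‖verticalIntegral (kernel a) R T‖ ≤ Real.exp (a * R) / R * (2 * T) := by
  have := norm_integral_le_of_norm_le_const (a := -T) (b := T)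
    (f := fun t : ℝ => kernel a (R + t * I)) (C := Real.exp (a * R) / R) fun t _ => by
      rw [norm_kernel, show ((R : ℂ) + t * I).re = R by simp]
      exact div_le_div_of_nonneg_left (by positivity) hR
        (by simpa [abs_of_pos hR] using abs_re_le_norm (R + t * I))
  rwa [show |T - -T| = 2 * T by rw [abs_of_nonneg (by linarith)]; ring] at this

theorem norm_verticalIntegral_kernel_le_of_neg {a c T : ℝ} (ha : a < 0) (hc : 0 < c)
    (hT : 0 < T) :
    ‖verticalIntegral (kernel a) c T‖ ≤ 2 * (Real.exp (a * c) / (-a)) / T := by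
  set K := Real.exp (a * c) / (-a)
  have hshift : ∀ R ≥ c, ‖verticalIntegral (kernel a) c T‖ ≤
      2 * K / T + Real.exp (a * R) / R * (2 * T) := by
    intro R hcR
    have hR : 0 < R := hc.trans_le hcR
    have hrect := I_mul_verticalIntegral_sub (T := T)
      ((differentiableOn_kernel a).mono (uIcc_reProdIm_subset_compl_zero hc hR _))
    have hτ : ∀ τ : ℝ, |τ| = T → ‖horizontalIntegral (kernel a) c R τ‖ ≤ K / T :=
      fun τ hτ => hτ ▸ norm_horizontalIntegral_kernel_le ha hcR (by rintro rfl; simp_all)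
    calc ‖verticalIntegral (kernel a) c T‖ = ‖I * verticalIntegral (kernel a) c T‖ := by simp
      _ = ‖horizontalIntegral (kernel a) c R (-T) - horizontalIntegral (kernel a) c R T +
            I * verticalIntegral (kernel a) R T‖ := by
          congr 1
          linear_combination -hrect
      _ ≤ ‖horizontalIntegral (kernel a) c R (-T)‖ + ‖horizontalIntegral (kernel a) c R T‖ +
            ‖verticalIntegral (kernel a) R T‖ :=
          (norm_add_le _ _).trans (add_le_add (norm_sub_le _ _) (by simp))
      _ ≤ K / T + K / T + Real.exp (a * R) / R * (2 * T) := by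
          gcongr
          · exact hτ _ (by simp [abs_of_pos hT])
          · exact hτ _ (abs_of_pos hT)
          · exact norm_verticalIntegral_kernel_le a hR hT.le
      _ = 2 * K / T + Real.exp (a * R) / R * (2 * T) := by ring
  have hexp : Tendsto (fun R => Real.exp (a * R)) atTop (𝓝 0) :=
    Real.tendsto_exp_atBot.comp (tendsto_id.const_mul_atTop_of_neg ha)
  have hlim : Tendsto (fun R => 2 * K / T + Real.exp (a * R) / R * (2 * T)) atTop
      (𝓝 (2 * K / T)) := by
    simpa [div_eq_mul_inv] using
      tendsto_const_nhds.add ((hexp.mul tendsto_inv_atTop_zero).mul_const (2 * T))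
  exact ge_of_tendsto hlim (eventually_atTop.2 ⟨c, hshift⟩)

theorem tendsto_verticalIntegral_kernel_of_neg {a c : ℝ} (ha : a < 0) (hc : 0 < c) :
    Tendsto (verticalIntegral (kernel a) c) atTop (𝓝 0) := by
  refine squeeze_zero_norm' ?_
    (by simpa using tendsto_inv_atTop_zero.const_mul (2 * (Real.exp (a * c) / (-a))))
  filter_upwards [eventually_gt_atTop 0] with T hT
  exact (norm_verticalIntegral_kernel_le_of_neg ha hc hT).trans_eq (div_eq_mul_inv _ _)

theorem continuous_line (σ : ℝ) : Continuous fun t : ℝ => (σ : ℂ) + t * I := by fun_prop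

theorem line_ne_zero {σ : ℝ} (hσ : σ ≠ 0) (t : ℝ) : (σ : ℂ) + t * I ≠ 0 :=
  fun h => hσ (by simpa using congrArg re h)

theorem verticalIntegral_add {f g : ℂ → ℂ} {σ : ℝ}
    (hf : Continuous fun t : ℝ => f (σ + t * I)) (hg : Continuous fun t : ℝ => g (σ + t * I))
    (T : ℝ) :
    verticalIntegral (f + g) σ T = verticalIntegral f σ T + verticalIntegral g σ T :=
  integral_add (hf.intervalIntegrable _ _) (hg.intervalIntegrable _ _)

theorem verticalIntegral_comp_neg (f : ℂ → ℂ) (σ T : ℝ) :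
    verticalIntegral (fun s => f (-s)) σ T = verticalIntegral f (-σ) T := by
  have h := integral_comp_neg (a := -T) (b := T) fun t : ℝ => f ((-σ : ℝ) + t * I)
  rw [neg_neg] at h
  rw [verticalIntegral, verticalIntegral, ← h]
  congr 1 with t
  push_cast
  ring_nf

theorem kernel_neg (a : ℝ) (s : ℂ) : kernel a (-s) = -kernel (-a) s := by
  simp [kernel, div_neg]

theorem kernel_eq_dslope_add_inv (a : ℝ) {s : ℂ} (hs : s ≠ 0) :
    kernel a s = dslope (fun z => cexp (a * z)) 0 s + s⁻¹ := by
  rw [kernel, dslope_of_ne _ hs, slope_def_field]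
  field_simp
  simp only [mul_zero, Complex.exp_zero]
  ring

theorem differentiable_dslope_exp (a : ℝ) :
    Differentiable ℂ (dslope (fun z => cexp (a * z)) 0) := by
  rw [← differentiableOn_univ, differentiableOn_dslope univ_mem]
  exact (differentiable_exp.comp (differentiable_id.const_mul _)).differentiableOn

theorem norm_dslope_exp_le (a : ℝ) {s : ℂ} (hs : s.im ≠ 0) :
    ‖dslope (fun z => cexp (a * z)) 0 s‖ ≤ (Real.exp (a * s.re) + 1) / |s.im| := by
  have hs0 : s ≠ 0 := fun h => hs (by simp [h])
  rw [dslope_of_ne _ hs0, slope_def_field, sub_zero, norm_div]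
  gcongr
  · simpa [norm_exp, re_ofReal_mul] using norm_sub_le (cexp (a * s)) (cexp (a * 0))
  · exact abs_im_le_norm s

theorem inv_line_sub_inv_line {c : ℝ} (hc : c ≠ 0) (t : ℝ) :
    ((c : ℂ) + t * I)⁻¹ - (((-c : ℝ) : ℂ) + t * I)⁻¹ =
      ((2 * c / (c ^ 2 + t ^ 2) : ℝ) : ℂ) := by
  have h₁ := line_ne_zero hc t
  have h₂ := line_ne_zero (neg_ne_zero.2 hc) t
  have h₃ : ((c ^ 2 + t ^ 2 : ℝ) : ℂ) ≠ 0 :=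
    ofReal_ne_zero.2 (by positivity : c ^ 2 + t ^ 2 ≠ 0)
  push_cast at h₂ h₃ ⊢
  field_simp
  ring_nf
  rw [I_sq]
  ring

theorem integral_two_mul_div_sq_add_sq {c : ℝ} (hc : 0 < c) (T : ℝ) :
    ∫ t in (-T)..T, 2 * c / (c ^ 2 + t ^ 2) = 4 * Real.arctan (T / c) := by
  have hderiv : ∀ t : ℝ,
      HasDerivAt (fun t => 2 * Real.arctan (t / c)) (2 * c / (c ^ 2 + t ^ 2)) t := by
    intro t
    refine (((hasDerivAt_id' t).div_const c).arctan.const_mul 2).congr_deriv ?_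
    field_simp
  have hint : IntervalIntegrable (fun t : ℝ => 2 * c / (c ^ 2 + t ^ 2)) volume (-T) T :=
    (continuous_const.div (by fun_prop) fun t => by positivity).intervalIntegrable _ _
  rw [integral_eq_sub_of_hasDerivAt (fun t _ => hderiv t) hint, neg_div, Real.arctan_neg]
  ring

theorem verticalIntegral_inv_sub {c : ℝ} (hc : 0 < c) (T : ℝ) :
    verticalIntegral (·⁻¹) c T - verticalIntegral (·⁻¹) (-c) T = 4 * Real.arctan (T / c) := by
  have hint : ∀ σ : ℝ, σ ≠ 0 →
      IntervalIntegrable (fun t : ℝ => ((σ : ℂ) + t * I)⁻¹) volume (-T) T :=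
    fun σ hσ => ((continuous_line σ).inv₀ (line_ne_zero hσ)).intervalIntegrable _ _
  rw [verticalIntegral, verticalIntegral,
    ← integral_sub (hint c hc.ne') (hint _ (neg_ne_zero.2 hc.ne')),
    integral_congr fun t _ => inv_line_sub_inv_line hc.ne' t, integral_ofReal,
    integral_two_mul_div_sq_add_sq hc]
  push_cast
  rfl

theorem tendsto_horizontalIntegral_dslope_exp (a : ℝ) {c : ℝ} (hc : 0 ≤ c) :
    Tendsto (horizontalIntegral (dslope (fun z => cexp (a * z)) 0) (-c) c) (cocompact ℝ)
      (𝓝 0) := by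
  refine tendsto_horizontalIntegral_cocompact (M := Real.exp (|a| * c) + 1) (by linarith)
    fun s hs him => (norm_dslope_exp_le a him).trans ?_
  have hre : |s.re| ≤ c := abs_le.2 hs
  have : a * s.re ≤ |a| * c :=
    (le_abs_self _).trans ((abs_mul a s.re).trans_le (by gcongr))
  gcongr

theorem tendsto_verticalIntegral_kernel_add_kernel_neg (a : ℝ) {c : ℝ} (hc : 0 < c) :
    Tendsto
      (fun T => I * verticalIntegral (kernel a) c T + I * verticalIntegral (kernel (-a)) c T)
      atTop (𝓝 (2 * Real.pi * I)) := by
  set g := dslope (fun z => cexp (a * z)) 0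
  have hsplit : ∀ σ : ℝ, σ ≠ 0 → ∀ T, verticalIntegral (kernel a) σ T =
      verticalIntegral g σ T + verticalIntegral (·⁻¹) σ T := by
    intro σ hσ T
    rw [← verticalIntegral_add
      ((differentiable_dslope_exp a).continuous.comp (continuous_line σ))
      ((continuous_line σ).inv₀ (line_ne_zero hσ))]
    exact integral_congr fun t _ => kernel_eq_dslope_add_inv a (line_ne_zero hσ t)
  have hreflect : ∀ T,
      verticalIntegral (kernel (-a)) c T = -verticalIntegral (kernel a) (-c) T := by
    intro T
    rw [← verticalIntegral_comp_neg, verticalIntegral, verticalIntegral,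
      ← intervalIntegral.integral_neg]
    simp only [kernel_neg, neg_neg]
  have hdecomp : ∀ T : ℝ,
      I * verticalIntegral (kernel a) c T + I * verticalIntegral (kernel (-a)) c T =
        (horizontalIntegral g (-c) c T - horizontalIntegral g (-c) c (-T)) +
        4 * (Real.arctan (T / c) : ℂ) * I := by
    intro T
    rw [hreflect, hsplit c hc.ne', hsplit (-c) (neg_ne_zero.2 hc.ne'),
      ← I_mul_verticalIntegral_sub (differentiable_dslope_exp a).differentiableOn]
    linear_combination I * verticalIntegral_inv_sub hc T
  have hhor : Tendsto (fun T => horizontalIntegral g (-c) c T - horizontalIntegral g (-c) c (-T))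
      atTop (𝓝 0) := by
    have h := tendsto_horizontalIntegral_dslope_exp a hc.le
    simpa using (h.mono_left atTop_le_cocompact).sub
      (h.comp (tendsto_neg_atTop_atBot.mono_right atBot_le_cocompact))
  have harctan : Tendsto (fun T : ℝ => 4 * (Real.arctan (T / c) : ℂ) * I) atTop
      (𝓝 (4 * ((Real.pi / 2 : ℝ) : ℂ) * I)) :=
    ((((continuous_ofReal.tendsto _).comp (tendsto_nhds_of_tendsto_nhdsWithin
      Real.tendsto_arctan_atTop)).comp (tendsto_id.atTop_div_const hc)).const_mul 4).mul_const I
  rw [show 2 * (Real.pi : ℂ) * I = 0 + 4 * ((Real.pi / 2 : ℝ) : ℂ) * I by push_cast; ring]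
  exact (hhor.add harctan).congr fun T => (hdecomp T).symm

theorem cpow_div_eq_kernel {y : ℝ} (hy : 0 < y) (s : ℂ) :
    (y : ℂ) ^ s / s = kernel (Real.log y) s := by
  rw [kernel, cpow_def_of_ne_zero (ofReal_ne_zero.2 hy.ne'), ← ofReal_log hy.le, mul_comm]

theorem tendsto_I_mul_verticalIntegral_kernel (a : ℝ) {c : ℝ} (hc : 0 < c) :
    Tendsto (fun T => I * verticalIntegral (kernel a) c T) atTop
      (𝓝 (if a < 0 then 0 else if a = 0 then Real.pi * I else 2 * Real.pi * I)) := by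
  rcases lt_trichotomy a 0 with ha | rfl | ha
  · simpa [ha] using (tendsto_verticalIntegral_kernel_of_neg ha hc).const_mul I
  · have h := (tendsto_verticalIntegral_kernel_add_kernel_neg 0 hc).const_mul (1 / 2 : ℂ)
    rw [neg_zero] at h
    rw [if_neg (lt_irrefl 0), if_pos rfl,
      show (Real.pi : ℂ) * I = 1 / 2 * (2 * Real.pi * I) by ring]
    exact h.congr fun T => by ring
  · simpa [ha.not_gt, ha.ne'] using (tendsto_verticalIntegral_kernel_add_kernel_neg a hc).sub
      ((tendsto_verticalIntegral_kernel_of_neg (neg_neg_of_pos ha) hc).const_mul I)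

end Perron

open Perron

/-- Perron's discontinuous integral: for `c > 0` and `y > 0`, the principal-value
integral `(1/(2πi)) ∫_{c-i∞}^{c+i∞} y^s ds/s` equals `0` if `y < 1`, `1/2` if `y = 1`,
and `1` if `y > 1`. -/
theorem perron_integral (c : ℝ) (hc : 0 < c) (y : ℝ) (hy : 0 < y) :
    Tendsto
      (fun T : ℝ => (1 / (2 * Real.pi * I)) *
        ∫ t in (-T)..T, (y : ℂ) ^ ((c : ℂ) + I * t) / ((c : ℂ) + I * t) * I)
      atTop
      (nhds (if y < 1 then 0 else if y = 1 then (1 / 2 : ℂ) else 1)) := by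
  have hintegrand : ∀ T : ℝ,
      ∫ t in (-T)..T, (y : ℂ) ^ ((c : ℂ) + I * t) / ((c : ℂ) + I * t) * I =
        I * verticalIntegral (kernel (Real.log y)) c T := by
    intro T
    rw [intervalIntegral.integral_mul_const, mul_comm, verticalIntegral]
    congr 1
    exact integral_congr fun t _ => by rw [cpow_div_eq_kernel hy, mul_comm I]
  have hlimit : (if y < 1 then 0 else if y = 1 then (1 / 2 : ℂ) else 1) =
      (1 / (2 * Real.pi * I)) * (if Real.log y < 0 then 0
        else if Real.log y = 0 then Real.pi * I else 2 * Real.pi * I) := by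
    have : (Real.pi : ℂ) ≠ 0 := ofReal_ne_zero.2 Real.pi_ne_zero
    rcases lt_trichotomy y 1 with h | rfl | h
    · simp [h, Real.log_neg hy h]
    · field_simp
      simp
    · rw [if_neg h.not_gt, if_neg h.ne', if_neg (Real.log_pos h).not_gt,
        if_neg (Real.log_pos h).ne']
      field_simp
  simp only [hintegrand, hlimit]
  exact (tendsto_I_mul_verticalIntegral_kernel _ hc).const_mul _
end
end

section
/- The identity ∏_{n=0}^∞ (1 - z^{2^n})^{-1} = ∏_{n=0}^∞ (1 + z^{2^n})^{n+1} holds for |z| < 1. -/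
/-!
With `w = z^{2^N}`, the factorisation `1 - w² = (1 - w)(1 + w)` makes the partial products
telescope: `∏_{n<N} (1 - z^{2^n}) · ∏_{n<N} (1 + z^{2^n})^{n+1} = (1 - z^{2^N})^N`.
All deviations from `1` that occur are bounded by `2 (2^n)² |z|^{2^n}`, terms of a subseries of
the convergent `∑ 2 m² |z|^m`; so both infinite products converge and the right-hand side tends
to `1`. Hence `∏ (1 - z^{2^n})` and `∏ (1 + z^{2^n})^{n+1}` are mutually inverse.
-/

open Filter Finset Topology

lemma norm_one_add_pow_sub_one_le {R : Type*} [NormedRing R] [NormOneClass R] (w : R) (m : ℕ) :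
    ‖(1 + w) ^ m - 1‖ ≤ m * (1 + ‖w‖) ^ m * ‖w‖ := by
  have hgeom : (1 + w) ^ m - 1 = (∑ i ∈ range m, (1 + w) ^ i) * w := by
    simpa using (geom_sum_mul (1 + w) m).symm
  have hterm : ∀ i ∈ range m, ‖(1 + w) ^ i‖ ≤ (1 + ‖w‖) ^ m := fun i hi =>
    calc ‖(1 + w) ^ i‖ ≤ ‖1 + w‖ ^ i := norm_pow_le _ _
      _ ≤ (1 + ‖w‖) ^ i := by gcongr; simpa using norm_add_le (1 : R) w
      _ ≤ (1 + ‖w‖) ^ m := pow_le_pow_right₀ (by simp) (mem_range.mp hi).le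
  calc ‖(1 + w) ^ m - 1‖ ≤ ‖∑ i ∈ range m, (1 + w) ^ i‖ * ‖w‖ :=
        hgeom ▸ norm_mul_le _ _
    _ ≤ (∑ _i ∈ range m, (1 + ‖w‖) ^ m) * ‖w‖ := by
        gcongr; exact (norm_sum_le _ _).trans (sum_le_sum hterm)
    _ = m * (1 + ‖w‖) ^ m * ‖w‖ := by simp

lemma summable_cast_two_pow_pow_mul_pow_two_pow {r : ℝ} (hr₀ : 0 ≤ r) (hr₁ : r < 1)
    (k : ℕ) :
    Summable fun n : ℕ => ((2 ^ n : ℕ) : ℝ) ^ k * r ^ 2 ^ n :=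
  (summable_pow_mul_geometric_of_norm_lt_one (R := ℝ) k
    (by rwa [Real.norm_of_nonneg hr₀])).comp_injective (Nat.pow_right_injective le_rfl)

lemma prod_one_sub_pow_two_pow_mul_prod {R : Type*} [CommRing R] (z : R) (N : ℕ) :
    (∏ k ∈ range N, (1 - z ^ 2 ^ k)) * ∏ k ∈ range N, (1 + z ^ 2 ^ k) ^ (k + 1)
      = (1 - z ^ 2 ^ N) ^ N := by
  induction N with
  | zero => simp
  | succ N ih =>
    have hsq : 1 - z ^ 2 ^ (N + 1) = (1 - z ^ 2 ^ N) * (1 + z ^ 2 ^ N) := by ring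
    rw [prod_range_succ, prod_range_succ, hsq, mul_pow]
    linear_combination (1 - z ^ 2 ^ N) * (1 + z ^ 2 ^ N) ^ (N + 1) * ih

section NormedRing

variable {R : Type*} [NormedCommRing R] [NormOneClass R]

lemma norm_one_add_pow_sub_one_le_of_norm_le_pow_two_pow {z w : R} (hz : ‖z‖ ≤ 1) {m n : ℕ}
    (hm : m ≤ n + 1) (hw : ‖w‖ ≤ ‖z‖ ^ 2 ^ n) :
    ‖(1 + w) ^ m - 1‖ ≤ 2 * (((2 ^ n : ℕ) : ℝ) ^ 2 * ‖z‖ ^ 2 ^ n) := by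
  have hw1 : ‖w‖ ≤ 1 := hw.trans (pow_le_one₀ (norm_nonneg z) hz)
  have hpow : (1 + ‖w‖) ^ m ≤ 2 ^ (n + 1) :=
    (pow_le_pow_left₀ (by positivity) (by linarith) m).trans (pow_le_pow_right₀ one_le_two hm)
  have hcoeff : ((n : ℝ) + 1) * 2 ^ (n + 1) ≤ 2 * ((2 ^ n : ℕ) : ℝ) ^ 2 := by
    have hn : (n : ℝ) + 1 ≤ 2 ^ n := by exact_mod_cast Nat.lt_two_pow_self
    push_cast
    rw [pow_succ]
    nlinarith [mul_le_mul_of_nonneg_right hn (pow_nonneg zero_le_two n)]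
  calc ‖(1 + w) ^ m - 1‖ ≤ m * (1 + ‖w‖) ^ m * ‖w‖ := norm_one_add_pow_sub_one_le w m
    _ ≤ ((n : ℝ) + 1) * 2 ^ (n + 1) * ‖z‖ ^ 2 ^ n := by gcongr; exact_mod_cast hm
    _ ≤ 2 * (((2 ^ n : ℕ) : ℝ) ^ 2 * ‖z‖ ^ 2 ^ n) := by rw [← mul_assoc]; gcongr

variable {z : R} (hz : ‖z‖ < 1)
include hz

lemma summable_norm_one_add_pow_two_pow_pow_sub_one :
    Summable fun n : ℕ => ‖(1 + z ^ 2 ^ n) ^ (n + 1) - 1‖ :=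
  ((summable_cast_two_pow_pow_mul_pow_two_pow (norm_nonneg z) hz 2).mul_left 2).of_nonneg_of_le
    (fun _ => norm_nonneg _) fun _ =>
      norm_one_add_pow_sub_one_le_of_norm_le_pow_two_pow hz.le le_rfl (norm_pow_le z _)

lemma tendsto_one_sub_pow_two_pow_pow :
    Tendsto (fun N : ℕ => (1 - z ^ 2 ^ N) ^ N) atTop (𝓝 1) := by
  rw [tendsto_iff_norm_sub_tendsto_zero]
  refine squeeze_zero (fun _ => norm_nonneg _) (fun N => ?_)
    ((summable_cast_two_pow_pow_mul_pow_two_pow (norm_nonneg z) hz 2).mul_left 2).tendsto_atTop_zero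
  simpa only [← sub_eq_add_neg] using
    norm_one_add_pow_sub_one_le_of_norm_le_pow_two_pow hz.le N.le_succ
      ((norm_neg _).trans_le (norm_pow_le z _))

variable [CompleteSpace R]

lemma multipliable_one_sub_pow_two_pow : Multipliable fun n : ℕ => 1 - z ^ 2 ^ n := by
  have hsum : Summable fun n : ℕ => ‖-z ^ 2 ^ n‖ :=
    (summable_geometric_of_lt_one (norm_nonneg z) hz).comp_injective
      (Nat.pow_right_injective le_rfl) |>.of_nonneg_of_le (fun _ => norm_nonneg _)
      fun n => (norm_neg _).trans_le (norm_pow_le z _)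
  simpa only [← sub_eq_add_neg] using multipliable_one_add_of_summable hsum

lemma multipliable_one_add_pow_two_pow_pow_succ :
    Multipliable fun n : ℕ => (1 + z ^ 2 ^ n) ^ (n + 1) := by
  simpa only [add_sub_cancel] using
    multipliable_one_add_of_summable (summable_norm_one_add_pow_two_pow_pow_sub_one hz)

end NormedRing

/-- For `|z| < 1`, `∏_{n=0}^∞ (1 - z^{2^n})⁻¹ = ∏_{n=0}^∞ (1 + z^{2^n})^{n+1}`. -/
theorem feigenbaum_product_identity (z : ℂ) (hz : ‖z‖ < 1) :
    ∏' n : ℕ, (1 - z ^ 2 ^ n)⁻¹ = ∏' n : ℕ, (1 + z ^ 2 ^ n) ^ (n + 1) := by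
  have hA := multipliable_one_sub_pow_two_pow hz
  have hB := multipliable_one_add_pow_two_pow_pow_succ hz
  have hAB : (∏' n : ℕ, (1 - z ^ 2 ^ n)) * ∏' n : ℕ, (1 + z ^ 2 ^ n) ^ (n + 1) = 1 := by
    refine tendsto_nhds_unique (hA.hasProd.tendsto_prod_nat.mul hB.hasProd.tendsto_prod_nat) ?_
    simpa only [prod_one_sub_pow_two_pow_mul_prod] using tendsto_one_sub_pow_two_pow_pow hz
  rw [hA.tprod_inv₀ (left_ne_zero_of_mul_eq_one hAB), inv_eq_of_mul_eq_one_right hAB]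
end
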